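/- arXiv:1110.0710 — 3 statements merged into one kernel-verified Lean document; each statement's English description precedes it below -/
import Mathlib

section
/- There exists a constant C_n > 0 for each integer n ≥ 1 such that for all λ ∈ (0,1) and all (x,p) ∈ [0,1) × ℝ, the quantity 𝒱_{λ,n}(x,p) satisfies 𝒱_{λ,n}(x,p) ≤ C_n·(1 + λ|p|)^{2n+1}. -/
open MeasureTheory Real

/-- The jump rate kernel `𝒥_λ(p,p')`. -/
noncomputable def Jker (lam p p' : ℝ) : ℝ :=
  ((1 + lam) / 64) * |p' - p| *
    Real.exp (-(1/2) * ((1 - lam)/2 * p - (1 + lam)/2 * p')^2)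

/-- The Hamiltonian `H(x,p) = p²/2 + V(x)`. -/
noncomputable def Ham (V : ℝ → ℝ) (x p : ℝ) : ℝ := p^2 / 2 + V x

/-- `𝒱_{λ,n}(x,p)`. -/
noncomputable def Vcal (V : ℝ → ℝ) (n : ℕ) (lam x p : ℝ) : ℝ :=
  ∫ p' : ℝ, |Real.sqrt (2 * Ham V x p') - Real.sqrt (2 * Ham V x p)| ^ (2 * n) * Jker lam p p'

/-
The kernel `𝒥_λ(p, ·)` is a Gaussian centred at `μ = (1-λ)/(1+λ)·p` times `|p' - p|`, and
`|μ - p| ≤ 2λ|p|`. Since `p ↦ √(p² + 2V(x))` is 1-Lipschitz, the integrand is at most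
`|p' - p|^(2n+1)` times that Gaussian, and `|p' - p| ≤ 2(1 + |p' - μ|)(1 + λ|p|)`. Translating by `μ`
leaves a fixed Gaussian moment, so `C_n = 2^(2n+1) ∫ (1 + |u|)^(2n+1) e^(-u²/8) du` works.
-/

lemma abs_sqrt_sq_add_sub_sqrt_sq_add_le {c : ℝ} (hc : 0 ≤ c) (x y : ℝ) :
    |√(x ^ 2 + c) - √(y ^ 2 + c)| ≤ |x - y| := by
  have hx := Real.sq_sqrt (show 0 ≤ x ^ 2 + c by positivity)
  have hy := Real.sq_sqrt (show 0 ≤ y ^ 2 + c by positivity)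
  have hxy : x * y + c ≤ √(x ^ 2 + c) * √(y ^ 2 + c) := by
    rw [← Real.sqrt_mul (by positivity)]
    exact Real.le_sqrt_of_sq_le (by nlinarith [sq_nonneg (x - y)])
  exact sq_le_sq.1 (by nlinarith)

lemma abs_sqrt_two_mul_Ham_sub_le {V : ℝ → ℝ} {x : ℝ} (hV : 0 ≤ V x) (p p' : ℝ) :
    |√(2 * Ham V x p') - √(2 * Ham V x p)| ≤ |p' - p| := by
  simpa only [Ham, mul_add, mul_div_cancel₀ _ (two_ne_zero (α := ℝ))] using
    abs_sqrt_sq_add_sub_sqrt_sq_add_le (by positivity : 0 ≤ 2 * V x) p' p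

lemma integrable_one_add_abs_pow_mul_exp_neg_mul_sq {b : ℝ} (hb : 0 < b) (k : ℕ) :
    Integrable fun u : ℝ => (1 + |u|) ^ k * exp (-b * u ^ 2) := by
  have hpow : Integrable fun u : ℝ => |u| ^ k * exp (-b * u ^ 2) := by
    simpa [abs_mul, abs_pow] using
      (integrable_rpow_mul_exp_neg_mul_sq hb (neg_one_lt_zero.trans_le k.cast_nonneg)).abs
  refine Integrable.mono' (((integrable_exp_neg_mul_sq hb).add hpow).const_mul (2 ^ k)) ?_ ?_
  · fun_prop
  · refine ae_of_all _ fun u => ?_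
    rw [Real.norm_of_nonneg (by positivity)]
    calc (1 + |u|) ^ k * exp (-b * u ^ 2)
        ≤ 2 ^ (k - 1) * (1 ^ k + |u| ^ k) * exp (-b * u ^ 2) := by
          gcongr; exact add_pow_le zero_le_one (abs_nonneg u) k
      _ ≤ 2 ^ k * (1 + |u| ^ k) * exp (-b * u ^ 2) := by
          rw [one_pow]; gcongr; exacts [one_le_two, Nat.sub_le k 1]
      _ = _ := by simp only [Pi.add_apply]; ring

lemma integral_one_add_abs_pow_mul_exp_neg_mul_sq_pos {b : ℝ} (hb : 0 < b) (k : ℕ) :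
    0 < ∫ u : ℝ, (1 + |u|) ^ k * exp (-b * u ^ 2) := by
  rw [integral_pos_iff_support_of_nonneg (fun u => by positivity)
    (integrable_one_add_abs_pow_mul_exp_neg_mul_sq hb k),
    Function.support_eq_univ fun u => by positivity]
  simp

noncomputable def jumpCenter (lam p : ℝ) : ℝ := (1 - lam) / (1 + lam) * p

lemma abs_sub_jumpCenter_le {lam : ℝ} (hlam : 0 ≤ lam) (p : ℝ) :
    |p - jumpCenter lam p| ≤ 2 * lam * |p| := by
  have h1 : 0 < 1 + lam := by linarith
  have : p - jumpCenter lam p = 2 * lam / (1 + lam) * p := by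
    unfold jumpCenter; field_simp; ring
  rw [this, abs_mul, abs_of_nonneg (by positivity : 0 ≤ 2 * lam / (1 + lam))]
  gcongr
  exact div_le_self (by positivity) (by linarith)

lemma Jker_nonneg {lam : ℝ} (hlam : -1 ≤ lam) (p p' : ℝ) : 0 ≤ Jker lam p p' := by
  unfold Jker
  have : 0 ≤ 1 + lam := by linarith
  positivity

lemma Jker_le {lam : ℝ} (h0 : 0 ≤ lam) (h1 : lam ≤ 1) (p p' : ℝ) :
    Jker lam p p' ≤ |p' - p| * exp (-(1 / 8) * (p' - jumpCenter lam p) ^ 2) := by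
  have hcentre : (1 - lam) / 2 * p - (1 + lam) / 2 * p'
      = (1 + lam) / 2 * (jumpCenter lam p - p') := by
    unfold jumpCenter; field_simp
  unfold Jker
  rw [hcentre]
  calc (1 + lam) / 64 * |p' - p| * exp (-(1 / 2) * ((1 + lam) / 2 * (jumpCenter lam p - p')) ^ 2)
      ≤ 1 * |p' - p| * exp (-(1 / 8) * (p' - jumpCenter lam p) ^ 2) := by
        have hsq : 0 ≤ lam * (2 + lam) * (p' - jumpCenter lam p) ^ 2 := by positivity
        gcongr ?_ * _ * ?_
        · linarith
        · exact exp_le_exp.2 (by nlinarith)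
    _ = _ := by rw [one_mul]

lemma abs_sub_le_mul_one_add_abs_sub_jumpCenter {lam : ℝ} (hlam : 0 ≤ lam) (p p' : ℝ) :
    |p' - p| ≤ 2 * (1 + lam * |p|) * (1 + |p' - jumpCenter lam p|) := by
  have hcentre := abs_sub_jumpCenter_le hlam p
  have htri := abs_sub_le p' (jumpCenter lam p) p
  rw [abs_sub_comm (jumpCenter lam p)] at htri
  nlinarith [abs_nonneg (p' - jumpCenter lam p), abs_nonneg p,
    mul_nonneg (mul_nonneg hlam (abs_nonneg p)) (abs_nonneg (p' - jumpCenter lam p))]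

lemma Vcal_integrand_le {V : ℝ → ℝ} {x lam : ℝ} (hV : 0 ≤ V x) (h0 : 0 ≤ lam) (h1 : lam ≤ 1)
    (n : ℕ) (p p' : ℝ) :
    |√(2 * Ham V x p') - √(2 * Ham V x p)| ^ (2 * n) * Jker lam p p' ≤
      (2 * (1 + lam * |p|)) ^ (2 * n + 1) * ((1 + |p' - jumpCenter lam p|) ^ (2 * n + 1) *
        exp (-(1 / 8) * (p' - jumpCenter lam p) ^ 2)) := by
  calc |√(2 * Ham V x p') - √(2 * Ham V x p)| ^ (2 * n) * Jker lam p p'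
      ≤ |p' - p| ^ (2 * n) * (|p' - p| * exp (-(1 / 8) * (p' - jumpCenter lam p) ^ 2)) :=
        mul_le_mul (pow_le_pow_left₀ (abs_nonneg _) (abs_sqrt_two_mul_Ham_sub_le hV p p') _)
          (Jker_le h0 h1 p p') (Jker_nonneg (by linarith) p p') (by positivity)
    _ = |p' - p| ^ (2 * n + 1) * exp (-(1 / 8) * (p' - jumpCenter lam p) ^ 2) := by ring
    _ ≤ (2 * (1 + lam * |p|) * (1 + |p' - jumpCenter lam p|)) ^ (2 * n + 1) *
          exp (-(1 / 8) * (p' - jumpCenter lam p) ^ 2) := by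
        gcongr; exact abs_sub_le_mul_one_add_abs_sub_jumpCenter h0 p p'
    _ = _ := by rw [mul_pow]; ring

theorem stmt0_general (V : ℝ → ℝ) (hVnn : ∀ x, 0 ≤ V x) (n : ℕ) :
    ∃ C > 0, ∀ lam ∈ Set.Ioo (0:ℝ) 1, ∀ x ∈ Set.Ico (0:ℝ) 1, ∀ p : ℝ,
      Vcal V n lam x p ≤ C * (1 + lam * |p|) ^ (2 * n + 1) := by
  set g : ℝ → ℝ := fun u => (1 + |u|) ^ (2 * n + 1) * exp (-(1 / 8) * u ^ 2)
  have hg : Integrable g := integrable_one_add_abs_pow_mul_exp_neg_mul_sq (by norm_num) _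
  have hg_pos : 0 < ∫ u, g u := integral_one_add_abs_pow_mul_exp_neg_mul_sq_pos (by norm_num) _
  refine ⟨2 ^ (2 * n + 1) * ∫ u, g u, by positivity, ?_⟩
  rintro lam ⟨h0, h1⟩ x - p
  calc Vcal V n lam x p
      ≤ ∫ p', (2 * (1 + lam * |p|)) ^ (2 * n + 1) * g (p' - jumpCenter lam p) :=
        integral_mono_of_nonneg
          (ae_of_all _ fun p' => mul_nonneg (by positivity) (Jker_nonneg (by linarith) p p'))
          ((hg.comp_sub_right _).const_mul _)
          (ae_of_all _ (Vcal_integrand_le (hVnn x) h0.le h1.le n p))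
    _ = _ := by rw [integral_const_mul, integral_sub_right_eq_self, mul_pow]; ring

theorem stmt0 (V : ℝ → ℝ) (hV : ContDiff ℝ 1 V) (hper : ∀ x, V (x + 1) = V x)
    (hVnn : ∀ x, 0 ≤ V x) (n : ℕ) (hn : 1 ≤ n) :
    ∃ C > 0, ∀ lam ∈ Set.Ioo (0:ℝ) 1, ∀ x ∈ Set.Ico (0:ℝ) 1, ∀ p : ℝ,
      Vcal V n lam x p ≤ C * (1 + lam * |p|) ^ (2 * n + 1) :=
  stmt0_general V hVnn n
end

section
/- There exists a constant C > 0 such that for all λ ∈ (0,1) and all (x,p) ∈ [0,1) × ℝ, |𝒜_λ(x,p)/ℰ_λ(p) + 2λ|p|/(1+λ)| ≤ C. -/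
open MeasureTheory Real

/-- `𝒜_λ(x,p)`. -/
noncomputable def Acal (V : ℝ → ℝ) (lam x p : ℝ) : ℝ :=
  ∫ p' : ℝ, (Real.sqrt (2 * Ham V x p') - Real.sqrt (2 * Ham V x p)) * Jker lam p p'

/-- The escape rate `ℰ_λ(p)`. -/
noncomputable def Erate (lam p : ℝ) : ℝ := ∫ p' : ℝ, Jker lam p p'

/-!
In the variable `u = (1+λ)/2 · p' - (1-λ)/2 · p` the kernel becomes `|u - λp| e^{-u²/2} / 32`,
with Jacobian `2/(1+λ)`, so `ℰ_λ(p)` is proportional to `G(λp)`, where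
`G(m) = ∫ |u - m| e^{-u²/2} du`. Since `|p'| ≤ √(2H(x,p')) ≤ |p'| + √(2V(x))`, the integrand of
`𝒜_λ + 2λ|p|/(1+λ) · ℰ_λ` is at most `(2|u|/(1+λ) + √(2V(x)))` times the kernel, and everything
reduces to the uniform comparison `∫ |u| |u - m| e^{-u²/2} du ≤ K · G(m)`: the left side grows at
most linearly in `|m|`, while `G(m) ≥ G(0) > 0` by symmetry and `G(m)` itself grows like `|m|`.
V is bounded on `[0,1]` by continuity.
-/

open Set

noncomputable def kernelProfile (m u : ℝ) : ℝ := |u - m| * exp (-(1/2) * u^2)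

noncomputable def kernelMass (m : ℝ) : ℝ := ∫ u, kernelProfile m u

noncomputable def kernelMoment (m : ℝ) : ℝ := ∫ u, |u| * kernelProfile m u

lemma integrable_sq_mul_exp_neg_half_sq : Integrable fun u : ℝ => u^2 * exp (-(1/2) * u^2) := by
  simpa using integrable_rpow_mul_exp_neg_mul_sq (b := 1/2) (by norm_num) (s := 2) (by norm_num)

lemma integrable_of_abs_le_one_add_sq_mul_exp {f : ℝ → ℝ} (hf : Continuous f) {C : ℝ}
    (h : ∀ u, |f u| ≤ C * ((1 + u^2) * exp (-(1/2) * u^2))) : Integrable f := by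
  have h0 : Integrable fun u : ℝ => exp (-(1/2) * u^2) := integrable_exp_neg_mul_sq (by norm_num)
  refine ((h0.add integrable_sq_mul_exp_neg_half_sq).const_mul C).mono' hf.aestronglyMeasurable (ae_of_all _ fun u => ?_)
  simpa [add_mul] using h u

lemma continuous_kernelProfile (m : ℝ) : Continuous (kernelProfile m) := by
  unfold kernelProfile; fun_prop

lemma kernelProfile_nonneg (m u : ℝ) : 0 ≤ kernelProfile m u := by
  unfold kernelProfile; positivity

lemma abs_le_one_add_sq (u : ℝ) : |u| ≤ 1 + u^2 := by
  nlinarith [sq_abs u, sq_nonneg (|u| - 1)]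

lemma integrable_kernelProfile (m : ℝ) : Integrable (kernelProfile m) := by
  refine integrable_of_abs_le_one_add_sq_mul_exp (C := 1 + |m|) (continuous_kernelProfile m)
    fun u => ?_
  rw [abs_of_nonneg (kernelProfile_nonneg m u), kernelProfile, ← mul_assoc]
  refine mul_le_mul_of_nonneg_right ?_ (exp_pos _).le
  nlinarith [abs_sub u m, abs_le_one_add_sq u, abs_nonneg m, sq_nonneg u]

lemma integrable_abs_mul_kernelProfile (m : ℝ) :
    Integrable fun u => |u| * kernelProfile m u := by
  refine integrable_of_abs_le_one_add_sq_mul_exp (C := 1 + |m|)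
    (continuous_abs.mul (continuous_kernelProfile m)) fun u => ?_
  rw [abs_of_nonneg (by positivity [kernelProfile_nonneg m u]), kernelProfile, ← mul_assoc,
    ← mul_assoc]
  refine mul_le_mul_of_nonneg_right ?_ (exp_pos _).le
  nlinarith [abs_sub u m, abs_le_one_add_sq u, abs_nonneg m, abs_nonneg u, sq_abs u]

lemma kernelMass_neg (m : ℝ) : kernelMass (-m) = kernelMass m := by
  rw [kernelMass, kernelMass, ← integral_neg_eq_self]
  congr 1 with u
  simp only [kernelProfile, neg_sq]
  rw [← abs_neg]; ring_nf

lemma kernelMass_zero_le (m : ℝ) : kernelMass 0 ≤ kernelMass m := by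
  have h : ∫ u, 2 * kernelProfile 0 u ≤ ∫ u, (kernelProfile m u + kernelProfile (-m) u) := by
    refine integral_mono ((integrable_kernelProfile 0).const_mul 2)
      ((integrable_kernelProfile m).add (integrable_kernelProfile (-m))) fun u => ?_
    simp only [kernelProfile]
    have : 2 * |u - 0| ≤ |u - m| + |u - -m| := by
      rw [sub_zero, sub_neg_eq_add]
      calc 2 * |u| = |u - m + (u + m)| := by
            rw [show u - m + (u + m) = 2 * u by ring, abs_mul, abs_two]
        _ ≤ |u - m| + |u + m| := abs_add_le _ _
    nlinarith [exp_pos (-(1/2) * u^2)]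
  rw [integral_const_mul, integral_add (integrable_kernelProfile m) (integrable_kernelProfile (-m))]
    at h
  rw [← kernelMass, ← kernelMass, ← kernelMass, kernelMass_neg] at h
  linarith

lemma kernelMass_zero_pos : 0 < kernelMass 0 :=
  integral_pos_of_integrable_nonneg_nonzero (x := 1) (continuous_kernelProfile 0)
    (integrable_kernelProfile 0) (kernelProfile_nonneg 0) (by simp [kernelProfile])

lemma kernelMass_pos (m : ℝ) : 0 < kernelMass m :=
  kernelMass_zero_pos.trans_le (kernelMass_zero_le m)

lemma abs_mul_integral_exp_le (m : ℝ) :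
    |m| * ∫ u, exp (-(1/2) * u^2) ≤ kernelMass m + kernelMass 0 := by
  rw [← integral_const_mul, kernelMass, kernelMass,
    ← integral_add (integrable_kernelProfile m) (integrable_kernelProfile 0)]
  refine integral_mono ((integrable_exp_neg_mul_sq (by norm_num)).const_mul _)
    ((integrable_kernelProfile m).add (integrable_kernelProfile 0)) fun u => ?_
  simp only [kernelProfile, sub_zero, ← add_mul]
  refine mul_le_mul_of_nonneg_right ?_ (exp_pos _).le
  simpa [abs_sub_comm u m] using abs_sub_le m u 0

lemma kernelMoment_le (m : ℝ) :
    kernelMoment m ≤ (∫ u, u^2 * exp (-(1/2) * u^2)) + |m| * kernelMass 0 := by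
  have h2 := integrable_sq_mul_exp_neg_half_sq
  rw [kernelMass, ← integral_const_mul, ← integral_add h2 ((integrable_kernelProfile 0).const_mul _)]
  refine integral_mono (integrable_abs_mul_kernelProfile m)
    (h2.add ((integrable_kernelProfile 0).const_mul _)) fun u => ?_
  simp only [kernelProfile, sub_zero, ← mul_assoc, ← add_mul]
  refine mul_le_mul_of_nonneg_right ?_ (exp_pos _).le
  nlinarith [abs_sub u m, abs_nonneg u, sq_abs u, abs_nonneg m]

lemma exists_kernelMoment_le_mul_kernelMass :
    ∃ K > 0, ∀ m, kernelMoment m ≤ K * kernelMass m := by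
  have hI₀ : 0 < ∫ u, exp (-(1/2) * u^2) := by
    rw [integral_gaussian]; positivity
  set I₀ := ∫ u, exp (-(1/2) * u^2)
  set I₂ := ∫ u, u^2 * exp (-(1/2) * u^2)
  set G₀ := kernelMass 0
  have hI₂ : 0 ≤ I₂ := integral_nonneg fun u => by positivity
  refine ⟨I₂ / G₀ + 2 * G₀ / I₀, by positivity [kernelMass_zero_pos], fun m => ?_⟩
  have hG : G₀ ≤ kernelMass m := kernelMass_zero_le m
  have hm : |m| * I₀ ≤ 2 * kernelMass m := by linarith [abs_mul_integral_exp_le m]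
  calc kernelMoment m ≤ I₂ + |m| * G₀ := kernelMoment_le m
    _ ≤ I₂ / G₀ * kernelMass m + 2 * G₀ / I₀ * kernelMass m := by
        refine add_le_add ?_ ?_
        · rw [div_mul_eq_mul_div, le_div_iff₀ kernelMass_zero_pos]
          exact mul_le_mul_of_nonneg_left hG hI₂
        · rw [div_mul_eq_mul_div, le_div_iff₀ hI₀]
          nlinarith [kernelMass_zero_pos]
    _ = _ := by ring

noncomputable def kernelVar (lam p p' : ℝ) : ℝ := (1 + lam) / 2 * p' - (1 - lam) / 2 * p

section Kernel

variable {lam : ℝ} (p : ℝ)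

lemma Jker_eq_kernelProfile (hlam : 0 < 1 + lam) (p' : ℝ) :
    Jker lam p p' = kernelProfile (lam * p) (kernelVar lam p p') / 32 := by
  have hvar : kernelVar lam p p' - lam * p = (1 + lam) / 2 * (p' - p) := by
    unfold kernelVar; ring
  rw [kernelProfile, hvar, abs_mul, abs_of_pos (by linarith), Jker, kernelVar]
  ring_nf

lemma integral_comp_kernelVar (hlam : 0 < 1 + lam) (f : ℝ → ℝ) :
    ∫ p', f (kernelVar lam p p') = 2 / (1 + lam) * ∫ u, f u := by
  simp only [kernelVar]
  rw [Measure.integral_comp_mul_left (fun y => f (y - (1 - lam) / 2 * p)),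
    integral_sub_right_eq_self f, smul_eq_mul, abs_of_pos (by positivity), inv_div]

lemma Integrable.comp_kernelVar (hlam : 0 < 1 + lam) {f : ℝ → ℝ} (hf : Integrable f) :
    Integrable fun p' => f (kernelVar lam p p') :=
  (hf.comp_sub_right _).comp_mul_left' (by positivity)

lemma integral_mul_Jker (hlam : 0 < 1 + lam) (f : ℝ → ℝ) :
    ∫ p', f (kernelVar lam p p') * Jker lam p p'
      = (∫ u, f u * kernelProfile (lam * p) u) / (16 * (1 + lam)) := by
  simp_rw [Jker_eq_kernelProfile p hlam, mul_div_assoc']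
  rw [integral_comp_kernelVar p hlam (fun u => f u * kernelProfile (lam * p) u / 32),
    integral_div]
  field_simp
  ring

lemma integrable_mul_Jker (hlam : 0 < 1 + lam) {f : ℝ → ℝ}
    (hf : Integrable fun u => f u * kernelProfile (lam * p) u) :
    Integrable fun p' => f (kernelVar lam p p') * Jker lam p p' := by
  simp_rw [Jker_eq_kernelProfile p hlam, mul_div_assoc']
  exact Integrable.comp_kernelVar p hlam (hf.div_const 32)

lemma Erate_eq (hlam : 0 < 1 + lam) :
    Erate lam p = kernelMass (lam * p) / (16 * (1 + lam)) := by
  simpa [Erate, kernelMass] using integral_mul_Jker p hlam fun _ => 1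

lemma integrable_Jker (hlam : 0 < 1 + lam) : Integrable (Jker lam p) := by
  simpa using integrable_mul_Jker p hlam (f := fun _ => 1) (by simpa using integrable_kernelProfile _)

end Kernel

lemma abs_sqrt_sq_add_sub_sqrt_sq_add_add_le {a b w : ℝ} (ha : 0 ≤ a) (hb : 0 < b) (hw : 0 ≤ w)
    (q q' : ℝ) :
    |√(q'^2 + w) - √(q^2 + w) + (b - a) * |q| / b| ≤ |b * q' - a * q| / b + √w := by
  have lower (r : ℝ) : |r| ≤ √(r^2 + w) := Real.abs_le_sqrt (by linarith)
  have upper (r : ℝ) : √(r^2 + w) ≤ |r| + √w := by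
    refine Real.sqrt_le_iff.2 ⟨by positivity, ?_⟩
    nlinarith [sq_abs r, Real.sq_sqrt hw, Real.sqrt_nonneg w, abs_nonneg r]
  have tri : |(b * |q'| - a * |q|)| ≤ |b * q' - a * q| := by
    simpa [abs_mul, abs_of_pos hb, abs_of_nonneg ha] using abs_abs_sub_abs_le_abs_sub (b * q') (a * q)
  obtain ⟨tri₁, tri₂⟩ := abs_le.1 tri
  have e₁ : (b - a) * |q| / b = |q| - a * |q| / b := by field_simp
  have e₂ : (b * |q'| - a * |q|) / b = |q'| - a * |q| / b := by field_simp
  have t₁ := div_le_div_of_nonneg_right tri₁ hb.le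
  have t₂ := div_le_div_of_nonneg_right tri₂ hb.le
  rw [neg_div, e₂] at t₁
  rw [e₂] at t₂
  rw [abs_le, e₁]
  constructor <;> linarith [lower q, lower q', upper q, upper q']

section Estimate

variable {V : ℝ → ℝ} {lam x : ℝ}

lemma abs_sqrt_two_Ham_sub_add_le (hlam : lam ∈ Ioo 0 1) (hVx : 0 ≤ V x) (p p' : ℝ) :
    |√(2 * Ham V x p') - √(2 * Ham V x p) + 2 * lam * |p| / (1 + lam)|
      ≤ 2 / (1 + lam) * |kernelVar lam p p'| + √(2 * V x) := by
  have h := abs_sqrt_sq_add_sub_sqrt_sq_add_add_le (a := (1 - lam) / 2) (b := (1 + lam) / 2)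
    (w := 2 * V x) (by linarith [hlam.2]) (by linarith [hlam.1]) (by positivity) p p'
  have hlam₁ : 1 + lam ≠ 0 := by linarith [hlam.1]
  have eH (q : ℝ) : 2 * Ham V x q = q^2 + 2 * V x := by rw [Ham]; ring
  have es : 2 * lam * |p| / (1 + lam)
      = ((1 + lam) / 2 - (1 - lam) / 2) * |p| / ((1 + lam) / 2) := by field_simp; ring
  have ek : 2 / (1 + lam) * |kernelVar lam p p'|
      = |(1 + lam) / 2 * p' - (1 - lam) / 2 * p| / ((1 + lam) / 2) := by
    rw [kernelVar]; field_simp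
  rwa [eH, eH, es, ek]

lemma abs_Acal_add_mul_Erate_le (hlam : lam ∈ Ioo 0 1) (hVx : 0 ≤ V x) (p : ℝ) :
    |Acal V lam x p + 2 * lam * |p| / (1 + lam) * Erate lam p|
      ≤ (2 / (1 + lam) * kernelMoment (lam * p) + √(2 * V x) * kernelMass (lam * p))
        / (16 * (1 + lam)) := by
  have h₁ : 0 < 1 + lam := by linarith [hlam.1]
  set s := 2 * lam * |p| / (1 + lam)
  set w := √(2 * V x)
  set D := fun p' => √(2 * Ham V x p') - √(2 * Ham V x p)
  set B := fun u => 2 / (1 + lam) * |u| + w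
  have hB : Integrable fun u => B u * kernelProfile (lam * p) u := by
    refine (((integrable_abs_mul_kernelProfile (lam * p)).const_mul (2 / (1 + lam))).add
      ((integrable_kernelProfile (lam * p)).const_mul w)).congr (ae_of_all _ fun u => ?_)
    simp only [B, Pi.add_apply]; ring
  have hJ := integrable_Jker p h₁
  have hpt (p' : ℝ) :
      ‖(D p' + s) * Jker lam p p'‖ ≤ B (kernelVar lam p p') * Jker lam p p' := by
    have hJ₀ : 0 ≤ Jker lam p p' := by
      rw [Jker_eq_kernelProfile p h₁]; exact div_nonneg (kernelProfile_nonneg _ _) (by norm_num)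
    rw [norm_mul, Real.norm_eq_abs, Real.norm_of_nonneg hJ₀]
    exact mul_le_mul_of_nonneg_right (abs_sqrt_two_Ham_sub_add_le hlam hVx p p') hJ₀
  have hDs : Integrable fun p' => (D p' + s) * Jker lam p p' := by
    refine (integrable_mul_Jker p h₁ hB).mono' ?_ (ae_of_all _ hpt)
    exact Continuous.aestronglyMeasurable (by simp only [D, Jker, Ham]; fun_prop)
  have hA : Acal V lam x p + s * Erate lam p = ∫ p', (D p' + s) * Jker lam p p' := by
    have hDJ : Integrable fun p' => D p' * Jker lam p p' :=
      (hDs.sub (hJ.const_mul s)).congr (ae_of_all _ fun p' => by simp only [Pi.sub_apply]; ring)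
    rw [Acal, Erate, ← integral_const_mul, ← integral_add hDJ (hJ.const_mul s)]
    simp only [D, add_mul]
  calc |Acal V lam x p + s * Erate lam p|
      ≤ ∫ p', B (kernelVar lam p p') * Jker lam p p' := by
        rw [hA, ← Real.norm_eq_abs]
        exact norm_integral_le_of_norm_le (integrable_mul_Jker p h₁ hB) (ae_of_all _ hpt)
    _ = _ := by
        rw [integral_mul_Jker p h₁, kernelMoment, kernelMass, ← integral_const_mul,
          ← integral_const_mul, ← integral_add]
        · simp only [B, add_mul, mul_assoc]
        · exact (integrable_abs_mul_kernelProfile _).const_mul _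
        · exact (integrable_kernelProfile _).const_mul _

lemma abs_Acal_div_Erate_add_le {K : ℝ} (hK : ∀ m, kernelMoment m ≤ K * kernelMass m)
    (hlam : lam ∈ Ioo 0 1) (hVx : 0 ≤ V x) (p : ℝ) :
    |Acal V lam x p / Erate lam p + 2 * lam * |p| / (1 + lam)| ≤ 2 * K + √(2 * V x) := by
  have h₁ : 0 < 1 + lam := by linarith [hlam.1]
  have hG := kernelMass_pos (lam * p)
  have hE : 0 < Erate lam p := by rw [Erate_eq p h₁]; positivity
  rw [div_add' _ _ _ hE.ne', abs_div, abs_of_pos hE, div_le_iff₀ hE]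
  refine (abs_Acal_add_mul_Erate_le hlam hVx p).trans ?_
  rw [Erate_eq p h₁, mul_div_assoc']
  gcongr
  have hN : 0 ≤ kernelMoment (lam * p) :=
    integral_nonneg fun u => mul_nonneg (abs_nonneg u) (kernelProfile_nonneg _ u)
  have h₂ : 2 / (1 + lam) ≤ 2 := div_le_self (by norm_num) (by linarith [hlam.1])
  nlinarith [hK (lam * p)]

end Estimate

theorem stmt4_general (V : ℝ → ℝ) (hV : ContDiff ℝ 1 V)
    (hVnn : ∀ x, 0 ≤ V x) :
    ∃ C > 0, ∀ lam ∈ Set.Ioo (0:ℝ) 1, ∀ x ∈ Set.Ico (0:ℝ) 1, ∀ p : ℝ,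
      |Acal V lam x p / Erate lam p + 2 * lam * |p| / (1 + lam)| ≤ C := by
  obtain ⟨K, hK₀, hK⟩ := exists_kernelMoment_le_mul_kernelMass
  obtain ⟨M, hM⟩ :=
    (isCompact_Icc.image_of_continuousOn (hV.continuous.continuousOn (s := Icc (0:ℝ) 1))).bddAbove
  refine ⟨2 * K + √(2 * M), by positivity, fun lam hlam x hx p => ?_⟩
  have hVM : V x ≤ M := hM (mem_image_of_mem V (Ico_subset_Icc_self hx))
  calc _ ≤ 2 * K + √(2 * V x) := abs_Acal_div_Erate_add_le hK hlam (hVnn x) p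
    _ ≤ 2 * K + √(2 * M) := by gcongr

theorem stmt4 (V : ℝ → ℝ) (hV : ContDiff ℝ 1 V) (hper : ∀ x, V (x + 1) = V x)
    (hVnn : ∀ x, 0 ≤ V x) :
    ∃ C > 0, ∀ lam ∈ Set.Ioo (0:ℝ) 1, ∀ x ∈ Set.Ico (0:ℝ) 1, ∀ p : ℝ,
      |Acal V lam x p / Erate lam p + 2 * lam * |p| / (1 + lam)| ≤ C :=
  stmt4_general V hV hVnn
end

section
/- There exists a constant C > 0 such that for all λ ∈ (0,1) and all p ∈ ℝ, both ℰ_λ(p) ≤ (1/(8(λ+1)))·(1 + C·λ·|p|) and λ·|p| ≤ C·ℰ_λ(p) hold. -/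
/-!
After the substitution `u = (1 + λ)/2 ⋅ p' - (1 - λ)/2 ⋅ p` the escape rate becomes
`ℰ_λ(p) = G(λ p) / (16 (1 + λ))`, where `G(m) = ∫ |u - m| e^{-u²/2} du` is the first absolute
moment of a Gaussian about `m`. By Jensen, `G(m) ≥ |∫ (u - m) e^{-u²/2} du| = √(2π) |m|`, and by
the triangle inequality `G(m) ≤ ∫ |u| e^{-u²/2} du + √(2π) |m| = 2 + √(2π) |m|`; since
`2 ≤ √(2π) ≤ 4`, both bounds hold with `C = 16`.
-/

open MeasureTheory Real

theorem integral_mul_exp_neg_mul_sq_eq_zero (b : ℝ) :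
    ∫ x : ℝ, x * exp (-b * x ^ 2) = 0 := by
  have h := integral_neg_eq_self (fun x : ℝ => x * exp (-b * x ^ 2)) volume
  simp only [neg_sq, neg_mul, integral_neg] at h ⊢
  linarith

theorem integral_Ioi_mul_exp_neg_mul_sq {b : ℝ} (hb : 0 < b) :
    ∫ x in Set.Ioi (0 : ℝ), x * exp (-b * x ^ 2) = (2 * b)⁻¹ := by
  apply Complex.ofReal_injective
  rw [← integral_complex_ofReal]
  push_cast
  exact integral_mul_cexp_neg_mul_sq (by simpa using hb)

theorem integral_abs_mul_exp_neg_mul_sq {b : ℝ} (hb : 0 < b) :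
    ∫ x : ℝ, |x| * exp (-b * x ^ 2) = b⁻¹ := by
  have h := integral_comp_abs (f := fun x : ℝ => x * exp (-b * x ^ 2))
  simp only [sq_abs] at h
  rw [h, integral_Ioi_mul_exp_neg_mul_sq hb]
  field_simp

theorem integrable_abs_sub_mul_exp_neg_mul_sq {b : ℝ} (hb : 0 < b) (m : ℝ) :
    Integrable fun x : ℝ => |x - m| * exp (-b * x ^ 2) := by
  refine ((integrable_mul_exp_neg_mul_sq hb).sub
    ((integrable_exp_neg_mul_sq hb).const_mul m)).abs.congr ?_
  filter_upwards with x
  rw [Pi.sub_apply, ← sub_mul, abs_mul, abs_of_pos (exp_pos _)]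

theorem abs_mul_sqrt_le_integral_abs_sub_mul_exp_neg_mul_sq {b : ℝ} (hb : 0 < b) (m : ℝ) :
    |m| * √(π / b) ≤ ∫ x : ℝ, |x - m| * exp (-b * x ^ 2) := by
  have hmean : ∫ x : ℝ, (x - m) * exp (-b * x ^ 2) = -(m * √(π / b)) := by
    simp only [sub_mul]
    rw [integral_sub (integrable_mul_exp_neg_mul_sq hb) ((integrable_exp_neg_mul_sq hb).const_mul m),
      integral_const_mul, integral_mul_exp_neg_mul_sq_eq_zero, integral_gaussian, zero_sub]
  calc |m| * √(π / b) = |∫ x : ℝ, (x - m) * exp (-b * x ^ 2)| := by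
        rw [hmean, abs_neg, abs_mul, abs_of_nonneg (sqrt_nonneg _)]
    _ ≤ ∫ x : ℝ, |(x - m) * exp (-b * x ^ 2)| := abs_integral_le_integral_abs
    _ = ∫ x : ℝ, |x - m| * exp (-b * x ^ 2) := by
        simp only [abs_mul, abs_of_pos (exp_pos _)]

theorem integral_abs_sub_mul_exp_neg_mul_sq_le {b : ℝ} (hb : 0 < b) (m : ℝ) :
    ∫ x : ℝ, |x - m| * exp (-b * x ^ 2) ≤ b⁻¹ + |m| * √(π / b) := by
  have habs : Integrable fun x : ℝ => |x| * exp (-b * x ^ 2) := by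
    simpa only [sub_zero] using integrable_abs_sub_mul_exp_neg_mul_sq hb 0
  have hconst := (integrable_exp_neg_mul_sq hb).const_mul |m|
  calc ∫ x : ℝ, |x - m| * exp (-b * x ^ 2)
      ≤ ∫ x : ℝ, (|x| * exp (-b * x ^ 2) + |m| * exp (-b * x ^ 2)) :=
        integral_mono (integrable_abs_sub_mul_exp_neg_mul_sq hb m) (habs.add hconst) fun x => by
          rw [← add_mul]
          exact mul_le_mul_of_nonneg_right (abs_sub _ _) (exp_pos _).le
    _ = b⁻¹ + |m| * √(π / b) := by
        rw [integral_add habs hconst, integral_const_mul, integral_abs_mul_exp_neg_mul_sq hb,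
          integral_gaussian]

theorem integral_comp_mul_add {E : Type*} [NormedAddCommGroup E] [NormedSpace ℝ E]
    (g : ℝ → E) (a c : ℝ) : ∫ x : ℝ, g (a * x + c) = |a⁻¹| • ∫ y : ℝ, g y := by
  rw [Measure.integral_comp_mul_left (fun y => g (y + c)) a, integral_add_right_eq_self g c]

theorem Erate_eq_integral_abs_sub_div {lam : ℝ} (hlam : -1 < lam) (p : ℝ) :
    Erate lam p = (∫ u : ℝ, |u - lam * p| * exp (-(1 / 2) * u ^ 2)) / (16 * (1 + lam)) := by
  have ha : 0 < (1 + lam) / 2 := by linarith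
  set g : ℝ → ℝ := fun u => |u - lam * p| * exp (-(1 / 2) * u ^ 2)
  have hJ : ∀ p', Jker lam p p' = 32⁻¹ * g ((1 + lam) / 2 * p' + -((1 - lam) / 2 * p)) := by
    intro p'
    have hsub : (1 + lam) / 2 * p' + -((1 - lam) / 2 * p) - lam * p = (1 + lam) / 2 * (p' - p) := by
      ring
    simp only [g, Jker]
    rw [hsub, abs_mul, abs_of_pos ha, show ((1 - lam) / 2 * p - (1 + lam) / 2 * p') ^ 2
      = ((1 + lam) / 2 * p' + -((1 - lam) / 2 * p)) ^ 2 by ring]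
    ring
  rw [Erate, integral_congr_ae (Filter.Eventually.of_forall hJ), integral_const_mul,
    integral_comp_mul_add g, smul_eq_mul, abs_of_pos (inv_pos.2 ha)]
  field_simp
  ring

theorem stmt5 :
    ∃ C > 0, ∀ lam ∈ Set.Ioo (0:ℝ) 1, ∀ p : ℝ,
      Erate lam p ≤ (1 / (8 * (lam + 1))) * (1 + C * lam * |p|) ∧
      lam * |p| ≤ C * Erate lam p := by
  refine ⟨16, by norm_num, ?_⟩
  rintro lam ⟨hlam0, hlam1⟩ p
  have hb : (0 : ℝ) < 1 / 2 := by norm_num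
  have hlower := abs_mul_sqrt_le_integral_abs_sub_mul_exp_neg_mul_sq hb (lam * p)
  have hupper := integral_abs_sub_mul_exp_neg_mul_sq_le hb (lam * p)
  rw [abs_mul, abs_of_pos hlam0] at hlower hupper
  have hsqrt_ge : 2 ≤ √(π / (1 / 2)) :=
    le_sqrt_of_sq_le (by linarith [pi_gt_three])
  have hsqrt_le : √(π / (1 / 2)) ≤ 4 :=
    sqrt_le_iff.2 ⟨by norm_num, by linarith [pi_lt_four]⟩
  have hlp : 0 ≤ lam * |p| := by positivity
  rw [Erate_eq_integral_abs_sub_div (by linarith) p]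
  set G := ∫ u : ℝ, |u - lam * p| * exp (-(1 / 2) * u ^ 2)
  constructor
  · calc G / (16 * (1 + lam)) ≤ (2 + 32 * (lam * |p|)) / (16 * (1 + lam)) := by
          gcongr
          nlinarith
      _ = 1 / (8 * (lam + 1)) * (1 + 16 * lam * |p|) := by
          field_simp
          ring
  · calc lam * |p| ≤ G / (1 + lam) := by
          rw [le_div_iff₀ (by linarith)]
          nlinarith
      _ = 16 * (G / (16 * (1 + lam))) := by
          field_simp
end
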